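/- arXiv:0907.2215 — 3 statements merged into one kernel-verified Lean document; each statement's English description precedes it below -/
import Mathlib

section
/- Let n ≥ 4 be even and let v : ℤ/nℤ → ℝ² be the vertices of a closed polygon in general position, i.e., the vertices are pairwise distinct and no vertex lies on a closed edge segment of which it is not an endpoint. Then the number of unordered pairs {i, j} with j ∉ {i−1, i, i+1} (mod n) such that the closed segments e_i and e_j have nonempty intersection is at most n(n−3)/2 − 1. (This is the paper's Theorem 2, part 2: for a PL-virtual knot with an even number n of edges, c(K) ≤ n(n−3)/2 − 1.) -/
/-!
Let `ℓ` be the line through the edge `e₀ = [v₀, v₁]`. If some edge nonadjacent to `e₀` misses it,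
that pair of edges does not cross. Otherwise every edge `e_j` with `2 ≤ j ≤ n - 2` meets `e₀`,
and general position forces its endpoints to lie strictly on opposite sides of `ℓ`. Following the
path `v₂, v₃, …, v_{n-1}`, the sides alternate `n - 3` times, an odd number since `n` is even, so
`v₂` and `v_{n-1}` lie on opposite sides of `ℓ`. Then the nonadjacent edges `e₁ = [v₁, v₂]` and
`e_{n-1} = [v_{n-1}, v₀]` cannot meet: off `ℓ` they lie on opposite sides, and on `ℓ` they only
have the distinct points `v₁` and `v₀`. Either way at least one of the `n(n-3)/2` pairs of
nonadjacent edges does not cross.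
-/

open Set

theorem ZMod.natCast_ne_zero_of_pos_of_lt {n k : ℕ} (hk : 0 < k) (hkn : k < n) :
    (k : ZMod n) ≠ 0 :=
  (ZMod.natCast_eq_zero_iff k n).not.2 (Nat.not_dvd_of_pos_of_lt hk hkn)

theorem ZMod.natCast_ne_natCast_of_lt {n a b : ℕ} (hab : a < b) (hbn : b < n + a) :
    (b : ZMod n) ≠ a := by
  intro e
  refine ZMod.natCast_ne_zero_of_pos_of_lt (n := n) (k := b - a) (by omega) (by omega) ?_
  rw [Nat.cast_sub hab.le, e, sub_self]

/-- The vertices are the edges `e_i` of an `n`-gon, joined when the polygon edges are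
nonadjacent. -/
def nonadjacencyGraph (n : ℕ) : SimpleGraph (ZMod n) where
  Adj i j := j ≠ i - 1 ∧ j ≠ i ∧ j ≠ i + 1
  symm := ⟨fun i j h =>
    ⟨fun e => h.2.2 (by rw [e]; ring), Ne.symm h.2.1, fun e => h.1 (by rw [e]; ring)⟩⟩
  loopless := ⟨fun i h => h.2.1 rfl⟩

instance (n : ℕ) : DecidableRel (nonadjacencyGraph n).Adj :=
  fun _ _ => inferInstanceAs (Decidable (_ ∧ _ ∧ _))

@[simp]
theorem nonadjacencyGraph_adj {n : ℕ} {i j : ZMod n} :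
    (nonadjacencyGraph n).Adj i j ↔ j ≠ i - 1 ∧ j ≠ i ∧ j ≠ i + 1 :=
  Iff.rfl

theorem nonadjacencyGraph_adj_natCast {n k l : ℕ} (hkl : k + 2 ≤ l) (hln : l + 2 ≤ n + k) :
    (nonadjacencyGraph n).Adj k l := by
  refine ⟨fun e => ?_, ZMod.natCast_ne_natCast_of_lt (n := n) (by omega) (by omega), fun e => ?_⟩
  · refine ZMod.natCast_ne_natCast_of_lt (n := n) (a := k) (b := l + 1) (by omega) (by omega) ?_
    push_cast
    linear_combination e
  · refine ZMod.natCast_ne_natCast_of_lt (n := n) (a := k + 1) (b := l) (by omega) (by omega) ?_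
    push_cast
    exact e

theorem degree_nonadjacencyGraph {n : ℕ} [NeZero n] (hn : 3 ≤ n) (i : ZMod n) :
    (nonadjacencyGraph n).degree i = n - 3 := by
  have h1 : (1 : ZMod n) ≠ 0 := by
    exact_mod_cast ZMod.natCast_ne_zero_of_pos_of_lt one_pos (by omega)
  have h2 : (2 : ZMod n) ≠ 0 := by
    exact_mod_cast ZMod.natCast_ne_zero_of_pos_of_lt two_pos (by omega)
  have hnbr : (nonadjacencyGraph n).neighborFinset i = Finset.univ \ {i - 1, i, i + 1} := by
    ext j
    simp
  have hthree : ({i - 1, i, i + 1} : Finset (ZMod n)).card = 3 := by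
    have hi : i ≠ i + 1 := fun e => h1 (by linear_combination -e)
    have hi' : i - 1 ∉ ({i, i + 1} : Finset (ZMod n)) := by
      simp only [Finset.mem_insert, Finset.mem_singleton, not_or]
      exact ⟨fun e => h1 (by linear_combination -e), fun e => h2 (by linear_combination -e)⟩
    rw [Finset.card_insert_of_notMem hi', Finset.card_pair hi]
  rw [← SimpleGraph.card_neighborFinset_eq_degree, hnbr,
    Finset.card_sdiff_of_subset (Finset.subset_univ _), hthree, Finset.card_univ, ZMod.card]

theorem ncard_edgeSet_nonadjacencyGraph {n : ℕ} [NeZero n] (hn : 3 ≤ n) :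
    (nonadjacencyGraph n).edgeSet.ncard = n * (n - 3) / 2 := by
  have hsum := (nonadjacencyGraph n).sum_degrees_eq_twice_card_edges
  simp only [degree_nonadjacencyGraph hn, Finset.sum_const, Finset.card_univ, ZMod.card,
    smul_eq_mul] at hsum
  rw [← SimpleGraph.coe_edgeFinset, ncard_coe_finset]
  omega

theorem AffineSubspace.sOppSide_of_forall_sOppSide_succ {𝕜 V P : Type*} [Field 𝕜]
    [LinearOrder 𝕜] [IsStrictOrderedRing 𝕜] [AddCommGroup V] [Module 𝕜 V] [AddTorsor V P]
    {s : AffineSubspace 𝕜 P} {x : ℕ → P} (m : ℕ)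
    (h : ∀ i < 2 * m + 1, s.SOppSide (x i) (x (i + 1))) : s.SOppSide (x 0) (x (2 * m + 1)) := by
  induction m with
  | zero => exact h 0 one_pos
  | succ m ih =>
    have hsame := (ih fun i hi => h i (by omega)).trans (h (2 * m + 1) (by omega))
    exact hsame.trans_sOppSide (h (2 * m + 2) (by omega))

section Segments

variable {𝕜 E : Type*} [Field 𝕜] [LinearOrder 𝕜] [IsStrictOrderedRing 𝕜]
  [AddCommGroup E] [Module 𝕜 E]

theorem mem_segment_or_of_inter_nonempty {a b c d : 𝕜}
    (h : (segment 𝕜 a b ∩ segment 𝕜 c d).Nonempty) :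
    c ∈ segment 𝕜 a b ∨ d ∈ segment 𝕜 a b ∨ a ∈ segment 𝕜 c d := by
  obtain ⟨x, hab, hcd⟩ := h
  simp only [segment_eq_uIcc, mem_uIcc] at *
  by_contra! hne
  grind

theorem mem_segment_or_of_inter_nonempty_of_mem_affineSpan_pair {a b p q : E} (hab : a ≠ b)
    (hp : p ∈ line[𝕜, a, b]) (hq : q ∈ line[𝕜, a, b])
    (h : (segment 𝕜 a b ∩ segment 𝕜 p q).Nonempty) :
    p ∈ segment 𝕜 a b ∨ q ∈ segment 𝕜 a b ∨ a ∈ segment 𝕜 p q := by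
  obtain ⟨r, rfl⟩ := mem_affineSpan_pair_iff_exists_lineMap_eq.1 hp
  obtain ⟨t, rfl⟩ := mem_affineSpan_pair_iff_exists_lineMap_eq.1 hq
  set L : 𝕜 →ᵃ[𝕜] E := AffineMap.lineMap a b
  have hL : Function.Injective L := AffineMap.lineMap_injective 𝕜 hab
  have hseg (x y : 𝕜) : segment 𝕜 (L x) (L y) = L '' segment 𝕜 x y :=
    (image_segment 𝕜 L x y).symm
  have h0 : L 0 = a := AffineMap.lineMap_apply_zero a b
  have h1 : L 1 = b := AffineMap.lineMap_apply_one a b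
  rw [← h0, ← h1] at h ⊢
  simp only [hseg, hL.mem_set_image, ← image_inter hL, image_nonempty] at h ⊢
  exact mem_segment_or_of_inter_nonempty h

theorem eq_of_mem_segment_of_mem {s : AffineSubspace 𝕜 E} {p q z : E} (hp : p ∈ s) (hq : q ∉ s)
    (hz : z ∈ segment 𝕜 p q) (hzs : z ∈ s) : z = p := by
  by_contra hne
  exact hq (affineSpan_pair_le_of_mem_of_mem hp hzs
    ((mem_segment_iff_wbtw.1 hz).right_mem_affineSpan_of_left_ne (Ne.symm hne)))

theorem notMem_affineSpan_pair_of_segment_inter_nonempty {a b p q : E} (hab : a ≠ b)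
    (ha : a ∉ segment 𝕜 p q) (hp : p ∉ segment 𝕜 a b) (hq : q ∉ segment 𝕜 a b)
    (h : (segment 𝕜 a b ∩ segment 𝕜 p q).Nonempty) : p ∉ line[𝕜, a, b] := by
  intro hpl
  by_cases hql : q ∈ line[𝕜, a, b]
  · rcases mem_segment_or_of_inter_nonempty_of_mem_affineSpan_pair hab hpl hql h with h' | h' | h'
    exacts [hp h', hq h', ha h']
  · obtain ⟨z, hzab, hzpq⟩ := h
    have hzl : z ∈ line[𝕜, a, b] := (mem_segment_iff_wbtw.1 hzab).mem_affineSpan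
    exact hp (eq_of_mem_segment_of_mem hpl hql hzpq hzl ▸ hzab)

theorem sOppSide_of_segment_inter_nonempty {a b p q : E} (hab : a ≠ b)
    (ha : a ∉ segment 𝕜 p q) (hp : p ∉ segment 𝕜 a b) (hq : q ∉ segment 𝕜 a b)
    (h : (segment 𝕜 a b ∩ segment 𝕜 p q).Nonempty) : line[𝕜, a, b].SOppSide p q := by
  obtain ⟨z, hzab, hzpq⟩ := h
  refine ⟨(mem_segment_iff_wbtw.1 hzpq).wOppSide₁₃ (mem_segment_iff_wbtw.1 hzab).mem_affineSpan,
    notMem_affineSpan_pair_of_segment_inter_nonempty hab ha hp hq ⟨z, hzab, hzpq⟩, ?_⟩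
  rw [segment_symm] at ha hzpq
  exact notMem_affineSpan_pair_of_segment_inter_nonempty hab ha hq hp ⟨z, hzab, hzpq⟩

theorem eq_of_segment_inter_nonempty_of_sOppSide {s : AffineSubspace 𝕜 E} {a b x y : E}
    (hxy : s.SOppSide x y) (ha : a ∈ s) (hb : b ∈ s)
    (h : (segment 𝕜 a x ∩ segment 𝕜 b y).Nonempty) : a = b := by
  obtain ⟨z, hzx, hzy⟩ := h
  by_cases hz : z ∈ s
  · exact (eq_of_mem_segment_of_mem ha hxy.2.1 hzx hz).symm.trans
      (eq_of_mem_segment_of_mem hb hxy.2.2 hzy hz)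
  · have hzx' := (mem_segment_iff_wbtw.1 hzx).wSameSide₂₃ ha
    have hzy' := (mem_segment_iff_wbtw.1 hzy).wSameSide₂₃ hb
    exact absurd (hzx'.symm.trans hzy' hz) hxy.not_wSameSide

variable {n : ℕ} {v : ZMod n → E}

theorem sOppSide_of_adj_zero_of_inter_nonempty (h01 : v 0 ≠ v 1)
    (hgen : ∀ k i : ZMod n, v k ∈ segment 𝕜 (v i) (v (i + 1)) → k = i ∨ k = i + 1)
    {j : ZMod n} (hj : (nonadjacencyGraph n).Adj 0 j)
    (hmeet : (segment 𝕜 (v 0) (v 1) ∩ segment 𝕜 (v j) (v (j + 1))).Nonempty) :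
    line[𝕜, v 0, v 1].SOppSide (v j) (v (j + 1)) := by
  obtain ⟨hj₁, hj₂, hj₃⟩ := hj
  rw [zero_sub] at hj₁
  rw [zero_add] at hj₃
  have hgen₀ (k : ZMod n) (hk : v k ∈ segment 𝕜 (v 0) (v 1)) : k = 0 ∨ k = 1 := by
    simpa using hgen k 0 (by simpa using hk)
  refine sOppSide_of_segment_inter_nonempty h01 (fun h => ?_) (fun h => ?_) (fun h => ?_) hmeet
  · rcases hgen 0 j h with e | e
    exacts [hj₂ e.symm, hj₁ (by linear_combination -e)]
  · rcases hgen₀ j h with e | e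
    exacts [hj₂ e, hj₃ (by linear_combination e)]
  · rcases hgen₀ (j + 1) h with e | e
    exacts [hj₁ (by linear_combination e), hj₂ (by linear_combination e)]

theorem exists_adj_segment_inter_eq_empty (hn : 4 ≤ n) (heven : Even n) (h01 : v 0 ≠ v 1)
    (hgen : ∀ k i : ZMod n, v k ∈ segment 𝕜 (v i) (v (i + 1)) → k = i ∨ k = i + 1) :
    ∃ i j, (nonadjacencyGraph n).Adj i j ∧
      segment 𝕜 (v i) (v (i + 1)) ∩ segment 𝕜 (v j) (v (j + 1)) = ∅ := by
  by_cases hcross : ∀ j, (nonadjacencyGraph n).Adj 0 j →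
      (segment 𝕜 (v 0) (v 1) ∩ segment 𝕜 (v j) (v (j + 1))).Nonempty
  swap
  · push Not at hcross
    obtain ⟨j, hj, hempty⟩ := hcross
    exact ⟨0, j, hj, by rwa [zero_add]⟩
  obtain ⟨m, rfl⟩ : ∃ m, n = 2 * m + 4 := by
    obtain ⟨r, rfl⟩ := heven
    exact ⟨r - 2, by omega⟩
  have hlast : ((2 * m + 3 : ℕ) : ZMod (2 * m + 4)) = -1 :=
    eq_neg_of_add_eq_zero_left (by exact_mod_cast ZMod.natCast_self (2 * m + 4))
  have hopp : line[𝕜, v 0, v 1].SOppSide (v 2) (v (-1)) := by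
    have hchain := AffineSubspace.sOppSide_of_forall_sOppSide_succ
      (x := fun i : ℕ => v ((i + 2 : ℕ) : ZMod (2 * m + 4))) m fun i hi => by
        have hadj := nonadjacencyGraph_adj_natCast (n := 2 * m + 4) (k := 0) (l := i + 2)
          (by omega) (by omega)
        convert sOppSide_of_adj_zero_of_inter_nonempty h01 hgen hadj (hcross _ hadj) using 3
        push_cast
        ring
    rw [← hlast]
    exact_mod_cast hchain
  refine ⟨1, -1, ?_, ?_⟩
  · rw [← hlast]
    exact_mod_cast nonadjacencyGraph_adj_natCast (k := 1) (l := 2 * m + 3) (by omega) (by omega)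
  · refine eq_empty_iff_forall_notMem.2 fun z ⟨hz₁, hz₂⟩ => h01 ?_
    rw [one_add_one_eq_two] at hz₁
    rw [neg_add_cancel, segment_symm] at hz₂
    exact (eq_of_segment_inter_nonempty_of_sOppSide hopp (right_mem_affineSpan_pair 𝕜 _ _)
      (left_mem_affineSpan_pair 𝕜 _ _) ⟨z, hz₁, hz₂⟩).symm

end Segments

/-- Theorem 2, part 2: for a closed polygon with an even number `n ≥ 4` of edges in the plane,
in general position (pairwise distinct vertices, and no vertex on a closed edge segment of
which it is not an endpoint), the number of unordered pairs of nonadjacent edges whose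
segments intersect is at most `n(n−3)/2 − 1`. -/
theorem crossing_bound_of_even_polygon (n : ℕ) (hn : 4 ≤ n) (heven : Even n)
    (v : ZMod n → ℝ × ℝ) (hinj : Function.Injective v)
    (hgen : ∀ k i : ZMod n, v k ∈ segment ℝ (v i) (v (i + 1)) → k = i ∨ k = i + 1) :
    {p : Sym2 (ZMod n) | ∃ i j : ZMod n,
        p = s(i, j) ∧ j ≠ i - 1 ∧ j ≠ i ∧ j ≠ i + 1 ∧
        (segment ℝ (v i) (v (i + 1)) ∩ segment ℝ (v j) (v (j + 1))).Nonempty}.ncard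
      ≤ n * (n - 3) / 2 - 1 := by
  have : Fact (1 < n) := ⟨by omega⟩
  have h01 : v 0 ≠ v 1 := hinj.ne zero_ne_one
  obtain ⟨i, j, hij, hdisj⟩ := exists_adj_segment_inter_eq_empty hn heven h01 hgen
  have hsub : {p : Sym2 (ZMod n) | ∃ i j : ZMod n,
        p = s(i, j) ∧ j ≠ i - 1 ∧ j ≠ i ∧ j ≠ i + 1 ∧
        (segment ℝ (v i) (v (i + 1)) ∩ segment ℝ (v j) (v (j + 1))).Nonempty} ⊂
      (nonadjacencyGraph n).edgeSet := by
    refine (Set.ssubset_iff_of_subset ?_).2 ⟨s(i, j), hij, ?_⟩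
    · rintro _ ⟨i, j, rfl, hadj⟩
      exact ⟨hadj.1, hadj.2.1, hadj.2.2.1⟩
    · rintro ⟨i', j', he, -, -, -, hmeet⟩
      rcases Sym2.eq_iff.1 he with ⟨rfl, rfl⟩ | ⟨rfl, rfl⟩
      · exact hmeet.ne_empty hdisj
      · exact hmeet.ne_empty (Set.inter_comm _ _ ▸ hdisj)
  have hlt := Set.ncard_lt_ncard hsub (Set.toFinite _)
  rw [ncard_edgeSet_nonadjacencyGraph (by omega)] at hlt
  omega
end

section
/- Let n ≥ 4 be even and let v : ℤ/nℤ → ℝ² be the vertices of a closed polygon in general position, i.e., the vertices are pairwise distinct and no vertex lies on a closed edge segment of which it is not an endpoint. Then it is not possible for every edge to cross all n−3 edges nonadjacent to it: there exist indices i and j with j ∉ {i−1, i, i+1} (mod n) such that the closed segments e_i and e_j are disjoint. -/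
/-!
Suppose every edge meets all edges nonadjacent to it. Pick a linear functional `ℓ` that is
injective on the vertices and let `v m` minimise it: seen from `v m`, all other vertices lie in
an open half-plane, where the sign of the cross product is a strict angular order. As `e m`
meets `e (m + 2), …, e (m - 2)`, the vertices `v (m + 2), …, v (m - 1)` alternate sides of the
line of `e m`; there are `n - 2` of them, an even number, so `v (m + 2)` and `v (m - 1)` lie on
opposite sides. As `e (m - 1)` meets `e (m + 1)`, the vertices `v (m + 1)` and `v (m + 2)` lie on
opposite sides of the line of `e (m - 1)`. These two separations contradict the angular order of
`v (m - 1)`, `v (m + 1)`, `v (m + 2)` around `v m`.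
-/

open Set

section Dual

variable {ι K M : Type*} [Finite ι] [Field K] [Infinite K] [AddCommGroup M] [Module K M]

theorem Module.exists_dual_comp_injective {v : ι → M} (hv : Function.Injective v) :
    ∃ f : Module.Dual K M, Function.Injective (f ∘ v) := by
  obtain ⟨f, hf⟩ := Module.exists_dual_forall_apply_ne_zero (K := K)
    (fun q : {q : ι × ι // q.1 ≠ q.2} ↦ v q.1.1 - v q.1.2)
    fun q ↦ sub_ne_zero.mpr (hv.ne q.2)
  refine ⟨f, fun i j hij ↦ by_contra fun hne ↦ hf ⟨(i, j), hne⟩ ?_⟩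
  simpa [sub_eq_zero] using hij

theorem Module.exists_dual_forall_lt [LinearOrder K] [IsStrictOrderedRing K] [Nonempty ι]
    {v : ι → M} (hv : Function.Injective v) :
    ∃ (f : Module.Dual K M) (m : ι), ∀ j ≠ m, f (v m) < f (v j) := by
  obtain ⟨f, hf⟩ := Module.exists_dual_comp_injective (K := K) hv
  obtain ⟨m, hm⟩ := Finite.exists_min (f ∘ v)
  exact ⟨f, m, fun j hj ↦ (hm j).lt_of_ne (hf.ne hj.symm)⟩

end Dual

theorem Set.Icc_subset_uIcc_of_mem_of_notMem {α : Type*} [LinearOrder α] {x y a b t : α}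
    (ht : t ∈ Icc x y) (ht' : t ∈ uIcc a b) (ha : a ∉ Icc x y) (hb : b ∉ Icc x y) :
    Icc x y ⊆ uIcc a b := by
  wlog hab : a ≤ b generalizing a b
  · rw [uIcc_comm] at ht' ⊢
    exact this ht' hb ha (le_of_not_ge hab)
  rw [uIcc_of_le hab] at ht' ⊢
  simp only [mem_Icc, not_and_or, not_le] at ht ht' ha hb
  exact Icc_subset_Icc (ha.resolve_right (by order)).le (hb.resolve_left (by order)).le

theorem ZMod.natCast_ne_zero_of_lt {n k : ℕ} (h₀ : k ≠ 0) (hk : k < n) : (k : ZMod n) ≠ 0 := by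
  rw [Ne, ZMod.natCast_eq_zero_iff]
  exact Nat.not_dvd_of_pos_of_lt (Nat.pos_of_ne_zero h₀) hk

theorem neg_one_pow_mul_mul_neg_of_alternating {f : ℕ → ℝ} {N : ℕ}
    (h : ∀ k ≤ N, f k * f (k + 1) < 0) : (-1) ^ N * (f 0 * f (N + 1)) < 0 := by
  induction N with
  | zero => simpa using h 0 le_rfl
  | succ N ih =>
    have hN := ih fun k hk ↦ h k (by omega)
    have hstep := h (N + 1) le_rfl
    rw [pow_succ]
    nlinarith [mul_pos_of_neg_of_neg hN hstep, sq_nonneg (f (N + 1))]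

/-- `cross (b - a) (x - a)` is positive, zero or negative according as `x` lies to the left of,
on, or to the right of the line from `a` to `b`. -/
def cross (u w : ℝ × ℝ) : ℝ := u.1 * w.2 - u.2 * w.1

theorem cross_swap (u w : ℝ × ℝ) : cross w u = -cross u w := by
  simp only [cross]; ring

theorem cross_sub_sub_swap (a b x : ℝ × ℝ) : cross (a - b) (x - b) = -cross (b - a) (x - a) := by
  simp only [cross, Prod.fst_sub, Prod.snd_sub]; ring

theorem cross_smul_add_smul (s t : ℝ) (w x y : ℝ × ℝ) :
    cross w (s • x + t • y) = s * cross w x + t * cross w y := by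
  simp only [cross, Prod.fst_add, Prod.snd_add, Prod.smul_fst, Prod.smul_snd, smul_eq_mul]; ring

theorem cross_cyclic (f : ℝ × ℝ →ₗ[ℝ] ℝ) (a b c : ℝ × ℝ) :
    cross a b * f c + cross b c * f a + cross c a * f b = 0 := by
  have : cross a b • c + cross b c • a + cross c a • b = 0 := by
    ext <;> simp only [cross, Prod.fst_add, Prod.snd_add, Prod.smul_fst, Prod.smul_snd,
      smul_eq_mul, Prod.fst_zero, Prod.snd_zero] <;> ring
  simpa using congrArg f this

theorem exists_eq_smul_of_cross_eq_zero {w z : ℝ × ℝ} (hw : w ≠ 0) (h : cross w z = 0) :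
    ∃ γ : ℝ, z = γ • w := by
  simp only [cross] at h
  by_cases h₁ : w.1 = 0
  · have h₂ : w.2 ≠ 0 := fun h₂ ↦ hw (Prod.ext h₁ h₂)
    refine ⟨z.2 / w.2, Prod.ext ?_ ?_⟩ <;> simp only [Prod.smul_fst, Prod.smul_snd, smul_eq_mul]
    · rw [h₁, mul_zero]; simpa [h₁, h₂] using h
    · field_simp
  · refine ⟨z.1 / w.1, Prod.ext ?_ ?_⟩ <;> simp only [Prod.smul_fst, Prod.smul_snd, smul_eq_mul]
    · field_simp
    · field_simp; linarith

/-- In an open half-plane bounded by a line through the origin, no vector separates the other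
two: the vectors are angularly ordered there. -/
theorem cross_mul_cross_nonneg_of_mul_neg (f : ℝ × ℝ →ₗ[ℝ] ℝ) {a b c : ℝ × ℝ}
    (ha : 0 < f a) (hb : 0 < f b) (hc : 0 < f c) (h : cross a b * cross a c < 0) :
    0 ≤ cross c a * cross c b := by
  rw [cross_swap c a] at h
  rw [cross_swap b c]
  by_contra! hneg
  simp only [mul_neg, neg_lt_zero] at h hneg
  have key : cross a b * cross c a * f c + cross c a * cross b c * f a + cross c a ^ 2 * f b = 0 := by
    linear_combination cross c a * cross_cyclic f a b c
  linarith [mul_pos h hc, mul_pos hneg ha, mul_nonneg (sq_nonneg (cross c a)) hb.le]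

theorem cross_sub_eq_zero_of_mem_segment {a b x : ℝ × ℝ} (hx : x ∈ segment ℝ a b) :
    cross (b - a) (x - a) = 0 := by
  rw [segment_eq_image_lineMap] at hx
  obtain ⟨t, -, rfl⟩ := hx
  simp only [AffineMap.lineMap_apply_module, cross, Prod.fst_add, Prod.snd_add, Prod.fst_sub,
    Prod.snd_sub, Prod.smul_fst, Prod.smul_snd, smul_eq_mul]
  ring

theorem left_mem_segment_of_cross_eq_zero {a b c d p : ℝ × ℝ} (hab : a ≠ b)
    (hc₀ : cross (b - a) (c - a) = 0) (hd₀ : cross (b - a) (d - a) = 0)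
    (hpab : p ∈ segment ℝ a b) (hpcd : p ∈ segment ℝ c d)
    (hc : c ∉ segment ℝ a b) (hd : d ∉ segment ℝ a b) : a ∈ segment ℝ c d := by
  set L := AffineMap.lineMap (k := ℝ) a b
  have hL : Function.Injective L := AffineMap.lineMap_injective ℝ hab
  have mem_line : ∀ x, cross (b - a) (x - a) = 0 → ∃ γ, L γ = x := fun x hx ↦ by
    obtain ⟨γ, hγ⟩ := exists_eq_smul_of_cross_eq_zero (sub_ne_zero.mpr hab.symm) hx
    exact ⟨γ, by rw [AffineMap.lineMap_apply, vsub_eq_sub, vadd_eq_add, ← hγ, sub_add_cancel]⟩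
  obtain ⟨γ, rfl⟩ := mem_line c hc₀
  obtain ⟨δ, rfl⟩ := mem_line d hd₀
  have hseg : segment ℝ (L γ) (L δ) = L '' uIcc γ δ := by rw [← image_segment, segment_eq_uIcc]
  rw [segment_eq_image_lineMap, hL.mem_set_image] at hc hd
  rw [segment_eq_image_lineMap] at hpab
  obtain ⟨t, ht, rfl⟩ := hpab
  rw [hseg, hL.mem_set_image] at hpcd
  rw [hseg]
  exact ⟨0, Icc_subset_uIcc_of_mem_of_notMem ht hpcd hc hd ⟨le_rfl, zero_le_one⟩,
    AffineMap.lineMap_apply_zero a b⟩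

theorem cross_mul_cross_neg_of_segment_inter {a b c d : ℝ × ℝ} (hab : a ≠ b)
    (h : (segment ℝ a b ∩ segment ℝ c d).Nonempty) (hc : c ∉ segment ℝ a b)
    (hd : d ∉ segment ℝ a b) (ha : a ∉ segment ℝ c d) :
    cross (b - a) (c - a) * cross (b - a) (d - a) < 0 := by
  obtain ⟨p, hpab, hpcd⟩ := h
  by_cases hcol : cross (b - a) (c - a) = 0 ∧ cross (b - a) (d - a) = 0
  · exact (ha (left_mem_segment_of_cross_eq_zero hab hcol.1 hcol.2 hpab hpcd hc hd)).elim
  have hp := cross_sub_eq_zero_of_mem_segment hpab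
  obtain ⟨s, t, hs, ht, hst, rfl⟩ := hpcd
  have hs₀ : 0 < s := hs.lt_of_ne' fun h₀ ↦ hd (by simpa [h₀, show t = 1 by linarith] using hpab)
  have ht₀ : 0 < t := ht.lt_of_ne' fun h₀ ↦ hc (by simpa [h₀, show s = 1 by linarith] using hpab)
  set X := cross (b - a) (c - a)
  set Y := cross (b - a) (d - a)
  have hcomb : s * X + t * Y = 0 := by
    rw [← cross_smul_add_smul, ← hp]
    congr 1
    calc s • (c - a) + t • (d - a) = s • c + t • d - (s + t) • a := by module
      _ = s • c + t • d - a := by rw [hst, one_smul]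
  rcases not_and_or.mp hcol with hX | hY
  · have h : t * (X * Y) = -(s * X ^ 2) := by linear_combination X * hcomb
    exact neg_of_mul_neg_right (h ▸ neg_neg_of_pos (by positivity)) ht₀.le
  · have h : s * (X * Y) = -(t * Y ^ 2) := by linear_combination Y * hcomb
    exact neg_of_mul_neg_right (h ▸ neg_neg_of_pos (by positivity)) hs₀.le

namespace Polygon

variable {n : ℕ}

def edge (v : ZMod n → ℝ × ℝ) (i : ZMod n) : Set (ℝ × ℝ) := segment ℝ (v i) (v (i + 1))

def IsGeneralPosition (v : ZMod n → ℝ × ℝ) : Prop :=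
  Function.Injective v ∧ ∀ k i, v k ∈ edge v i → k = i ∨ k = i + 1

def MeetsNonadjacentEdges (v : ZMod n → ℝ × ℝ) (i : ZMod n) : Prop :=
  ∀ j, j ≠ i - 1 → j ≠ i → j ≠ i + 1 → (edge v i ∩ edge v j).Nonempty

variable {v : ZMod n → ℝ × ℝ}

theorem IsGeneralPosition.cross_mul_cross_neg (hv : IsGeneralPosition v) {i j : ZMod n}
    (h₁ : j ≠ i - 1) (h₂ : j ≠ i) (h₃ : j ≠ i + 1) (hij : (edge v i ∩ edge v j).Nonempty) :
    cross (v (i + 1) - v i) (v j - v i) * cross (v (i + 1) - v i) (v (j + 1) - v i) < 0 := by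
  obtain ⟨hinj, hgen⟩ := hv
  refine cross_mul_cross_neg_of_segment_inter (hinj.ne fun h ↦ ?_) hij (fun hj ↦ ?_) (fun hj ↦ ?_)
    fun hi ↦ ?_
  · exact h₂ (by linear_combination (i - j) * h)
  · rcases hgen j i hj with h | h
    exacts [h₂ h, h₃ h]
  · rcases hgen (j + 1) i hj with h | h
    exacts [h₁ (by linear_combination h), h₂ (by linear_combination h)]
  · rcases hgen i j hi with h | h
    exacts [h₂ h.symm, h₁ (by linear_combination -h)]

theorem IsGeneralPosition.cross_mul_cross_succ_neg (hv : IsGeneralPosition v) {i : ZMod n}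
    (hi : MeetsNonadjacentEdges v i) {k : ℕ} (hk : k + 3 < n) :
    cross (v (i + 1) - v i) (v (i + 2 + k) - v i) *
      cross (v (i + 1) - v i) (v (i + 2 + (k + 1 : ℕ)) - v i) < 0 := by
  have hne : ∀ l : ℕ, l ≠ 0 → l < n → (l : ZMod n) ≠ 0 := fun l ↦ ZMod.natCast_ne_zero_of_lt
  have h₁ : i + 2 + k ≠ i - 1 := fun h ↦
    hne (k + 3) (by omega) hk (by push_cast; linear_combination h)
  have h₂ : i + 2 + k ≠ i := fun h ↦
    hne (k + 2) (by omega) (by omega) (by push_cast; linear_combination h)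
  have h₃ : i + 2 + k ≠ i + 1 := fun h ↦
    hne (k + 1) (by omega) (by omega) (by push_cast; linear_combination h)
  rw [Nat.cast_succ, ← add_assoc]
  exact hv.cross_mul_cross_neg h₁ h₂ h₃ (hi _ h₁ h₂ h₃)

theorem IsGeneralPosition.cross_mul_cross_neg_of_even (hv : IsGeneralPosition v) (hn : 4 ≤ n)
    (heven : Even n) {i : ZMod n} (hi : MeetsNonadjacentEdges v i) :
    cross (v (i + 1) - v i) (v (i + 2) - v i) * cross (v (i + 1) - v i) (v (i - 1) - v i) < 0 := by
  obtain ⟨q, rfl⟩ : ∃ q, n = q + 4 := ⟨n - 4, by omega⟩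
  have hq : Even q := (Nat.even_add.mp heven).mpr (by decide)
  have h := neg_one_pow_mul_mul_neg_of_alternating (N := q)
    (f := fun k : ℕ ↦ cross (v (i + 1) - v i) (v (i + 2 + k) - v i))
    fun k hk ↦ hv.cross_mul_cross_succ_neg hi (by omega)
  have hlast : i + 2 + ((q + 1 : ℕ) : ZMod (q + 4)) = i - 1 := by
    have h₀ := ZMod.natCast_self (q + 4)
    push_cast at h₀ ⊢
    linear_combination h₀
  rwa [hq.neg_one_pow, one_mul, Nat.cast_zero, add_zero, hlast] at h

theorem IsGeneralPosition.cross_mul_cross_neg_of_pred (hv : IsGeneralPosition v) (hn : 4 ≤ n)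
    {i : ZMod n} (hi : MeetsNonadjacentEdges v (i - 1)) :
    cross (v (i - 1) - v i) (v (i + 1) - v i) * cross (v (i - 1) - v i) (v (i + 2) - v i) < 0 := by
  have h := hv.cross_mul_cross_succ_neg hi (k := 0) (by omega)
  rw [show i - 1 + 1 = i by ring, show i - 1 + 2 + ((0 : ℕ) : ZMod n) = i + 1 by push_cast; ring,
    show i - 1 + 2 + ((0 + 1 : ℕ) : ZMod n) = i + 2 by push_cast; ring] at h
  rwa [cross_sub_sub_swap (v i) (v (i - 1)) (v (i + 1)),
    cross_sub_sub_swap (v i) (v (i - 1)) (v (i + 2)), neg_mul_neg] at h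

end Polygon

/-- For a closed polygon with an even number `n ≥ 4` of edges in the plane, in general
position, it is not possible for every edge to cross all `n − 3` edges nonadjacent to it:
there exist nonadjacent edges `e i` and `e j` whose closed segments are disjoint. -/
theorem exists_disjoint_nonadjacent_edges (n : ℕ) (hn : 4 ≤ n) (heven : Even n)
    (v : ZMod n → ℝ × ℝ) (hinj : Function.Injective v)
    (hgen : ∀ k i : ZMod n, v k ∈ segment ℝ (v i) (v (i + 1)) → k = i ∨ k = i + 1) :
    ∃ i j : ZMod n, j ≠ i - 1 ∧ j ≠ i ∧ j ≠ i + 1 ∧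
      segment ℝ (v i) (v (i + 1)) ∩ segment ℝ (v j) (v (j + 1)) = ∅ := by
  by_contra! hmeets
  have hv : Polygon.IsGeneralPosition v := ⟨hinj, hgen⟩
  have : NeZero n := ⟨by omega⟩
  obtain ⟨ℓ, m, hm⟩ := Module.exists_dual_forall_lt (K := ℝ) hinj
  have hpos : ∀ j ≠ m, 0 < ℓ (v j - v m) := fun j hj ↦ by rw [map_sub, sub_pos]; exact hm j hj
  have h₁ : (1 : ZMod n) ≠ 0 := by exact_mod_cast ZMod.natCast_ne_zero_of_lt one_ne_zero (by omega)
  have h₂ : (2 : ZMod n) ≠ 0 := by exact_mod_cast ZMod.natCast_ne_zero_of_lt two_ne_zero (by omega)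
  refine (cross_mul_cross_nonneg_of_mul_neg ℓ (hpos (m + 1) ?_) (hpos (m + 2) ?_) (hpos (m - 1) ?_)
    (hv.cross_mul_cross_neg_of_even hn heven (hmeets m))).not_gt
    (hv.cross_mul_cross_neg_of_pred hn (hmeets (m - 1)))
  · exact fun h ↦ h₁ (by linear_combination h)
  · exact fun h ↦ h₂ (by linear_combination h)
  · exact fun h ↦ h₁ (by linear_combination -h)
end

section
/- Let v_0, v_1, v_2, v_3 ∈ ℝ² be pairwise distinct points such that no v_k lies on a closed segment [v_i, v_{i+1}] (indices mod 4) of which it is not an endpoint. Then it is not the case that both the segments [v_0, v_1] and [v_2, v_3] intersect and the segments [v_1, v_2] and [v_3, v_0] intersect. Consequently, a closed quadrilateral in general position in the plane has at most one crossing between nonadjacent edges. -/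
/-- Signed area (times 2) of the triangle `x y z`. -/
def Dt (x y z : ℝ × ℝ) : ℝ :=
  (y.1 - x.1) * (z.2 - x.2) - (y.2 - x.2) * (z.1 - x.1)

lemma Dt_cyc (x y z : ℝ × ℝ) : Dt x y z = Dt z x y := by simp only [Dt]; ring

lemma Dt_key (x y z w : ℝ × ℝ) {a b c d : ℝ} (hab : a + b = 1) (hcd : c + d = 1)
    (h : a • x + b • y = c • z + d • w) :
    c * Dt x y z + d * Dt x y w = 0 := by
  have h1 : a * x.1 + b * y.1 = c * z.1 + d * w.1 := congrArg Prod.fst h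
  have h2 : a * x.2 + b * y.2 = c * z.2 + d * w.2 := congrArg Prod.snd h
  have ha : a = 1 - b := by linarith
  have hc : c = 1 - d := by linarith
  subst ha hc
  simp only [Dt]
  linear_combination (y.2 - x.2) * h1 - (y.1 - x.1) * h2

lemma Dt_identity (x y z w : ℝ × ℝ) :
    Dt y z w - Dt x z w + Dt x y w - Dt x y z = 0 := by
  simp only [Dt]; ring

lemma exists_smul (u w : ℝ × ℝ) (hu : u ≠ 0) (h : u.1 * w.2 - u.2 * w.1 = 0) :
    ∃ x : ℝ, w = x • u := by
  have h' : u.1 ≠ 0 ∨ u.2 ≠ 0 := by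
    by_contra hc
    push_neg at hc
    exact hu (Prod.ext hc.1 hc.2)
  rcases h' with h1 | h2
  · refine ⟨w.1 / u.1, Prod.ext ?_ ?_⟩
    · simp [Prod.smul_fst]; field_simp
    · simp [Prod.smul_snd]; field_simp; linear_combination h
  · refine ⟨w.2 / u.2, Prod.ext ?_ ?_⟩
    · simp [Prod.smul_fst]; field_simp; linear_combination -h
    · simp [Prod.smul_snd]; field_simp

lemma opp_sign {a b d e : ℝ} (h : a * d + b * e = 0) (ha : 0 < a) (hb : 0 < b)
    (hd : d ≠ 0) : d * e < 0 := by
  rcases hd.lt_or_gt with h1 | h1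
  · have he : 0 < e := by nlinarith
    exact mul_neg_of_neg_of_pos h1 he
  · have he : e < 0 := by nlinarith
    exact mul_neg_of_pos_of_neg h1 he

lemma zero_link {a b d e : ℝ} (h : a * d + b * e = 0) (ha : 0 < a) (hb : 0 < b)
    (hd : d = 0) : e = 0 := by
  rw [hd, mul_zero, zero_add] at h
  exact (mul_eq_zero.1 h).resolve_left hb.ne'



set_option maxHeartbeats 1000000 in
/-- A closed quadrilateral in general position in the plane has at most one crossing between
nonadjacent edges: if the vertices `v 0, v 1, v 2, v 3 ∈ ℝ²` are pairwise distinct and no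
vertex lies on a closed edge segment of which it is not an endpoint, then the segments
`[v 0, v 1]` and `[v 2, v 3]`, and the segments `[v 1, v 2]` and `[v 3, v 0]`, cannot both
intersect. -/
theorem quadrilateral_at_most_one_crossing (v : ZMod 4 → ℝ × ℝ)
    (hinj : Function.Injective v)
    (hgen : ∀ k i : ZMod 4, v k ∈ segment ℝ (v i) (v (i + 1)) → k = i ∨ k = i + 1) :
    ¬ ((segment ℝ (v 0) (v 1) ∩ segment ℝ (v 2) (v 3)).Nonempty ∧
       (segment ℝ (v 1) (v 2) ∩ segment ℝ (v 3) (v 0)).Nonempty) := by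
  rintro ⟨⟨p, hp01, hp23⟩, q, hq12, hq30⟩
  have i01 : ((0:ZMod 4) + 1) = 1 := by decide
  have i12 : ((1:ZMod 4) + 1) = 2 := by decide
  have i23 : ((2:ZMod 4) + 1) = 3 := by decide
  have i30 : ((3:ZMod 4) + 1) = 0 := by decide
  have g02 : v 0 ∉ segment ℝ (v 2) (v 3) := fun h =>
    absurd (hgen 0 2 (by rw [i23]; exact h)) (by decide)
  have g12 : v 1 ∉ segment ℝ (v 2) (v 3) := fun h =>
    absurd (hgen 1 2 (by rw [i23]; exact h)) (by decide)
  have g20 : v 2 ∉ segment ℝ (v 0) (v 1) := fun h =>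
    absurd (hgen 2 0 (by rw [i01]; exact h)) (by decide)
  have g30 : v 3 ∉ segment ℝ (v 0) (v 1) := fun h =>
    absurd (hgen 3 0 (by rw [i01]; exact h)) (by decide)
  have g13 : v 1 ∉ segment ℝ (v 3) (v 0) := fun h =>
    absurd (hgen 1 3 (by rw [i30]; exact h)) (by decide)
  have g23 : v 2 ∉ segment ℝ (v 3) (v 0) := fun h =>
    absurd (hgen 2 3 (by rw [i30]; exact h)) (by decide)
  have g31 : v 3 ∉ segment ℝ (v 1) (v 2) := fun h =>
    absurd (hgen 3 1 (by rw [i12]; exact h)) (by decide)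
  have g01 : v 0 ∉ segment ℝ (v 1) (v 2) := fun h =>
    absurd (hgen 0 1 (by rw [i12]; exact h)) (by decide)
  obtain ⟨a1, b1, ha1, hb1, hab1, hp1⟩ := hp01
  obtain ⟨a2, b2, ha2, hb2, hab2, hp2⟩ := hp23
  obtain ⟨a3, b3, ha3, hb3, hab3, hq1⟩ := hq12
  obtain ⟨a4, b4, ha4, hb4, hab4, hq2⟩ := hq30
  -- strict interiority
  have hb1' : 0 < b1 := by
    rcases hb1.eq_or_lt with h | h
    · exfalso
      have hpv : p = v 0 := by
        rw [← hp1, ← h, show a1 = 1 by linarith]; simp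
      exact g02 (hpv ▸ ⟨a2, b2, ha2, hb2, hab2, hp2⟩)
    · exact h
  have ha1' : 0 < a1 := by
    rcases ha1.eq_or_lt with h | h
    · exfalso
      have hpv : p = v 1 := by
        rw [← hp1, ← h, show b1 = 1 by linarith]; simp
      exact g12 (hpv ▸ ⟨a2, b2, ha2, hb2, hab2, hp2⟩)
    · exact h
  have hb2' : 0 < b2 := by
    rcases hb2.eq_or_lt with h | h
    · exfalso
      have hpv : p = v 2 := by
        rw [← hp2, ← h, show a2 = 1 by linarith]; simp
      exact g20 (hpv ▸ ⟨a1, b1, ha1, hb1, hab1, hp1⟩)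
    · exact h
  have ha2' : 0 < a2 := by
    rcases ha2.eq_or_lt with h | h
    · exfalso
      have hpv : p = v 3 := by
        rw [← hp2, ← h, show b2 = 1 by linarith]; simp
      exact g30 (hpv ▸ ⟨a1, b1, ha1, hb1, hab1, hp1⟩)
    · exact h
  have hb3' : 0 < b3 := by
    rcases hb3.eq_or_lt with h | h
    · exfalso
      have hqv : q = v 1 := by
        rw [← hq1, ← h, show a3 = 1 by linarith]; simp
      exact g13 (hqv ▸ ⟨a4, b4, ha4, hb4, hab4, hq2⟩)
    · exact h
  have ha3' : 0 < a3 := by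
    rcases ha3.eq_or_lt with h | h
    · exfalso
      have hqv : q = v 2 := by
        rw [← hq1, ← h, show b3 = 1 by linarith]; simp
      exact g23 (hqv ▸ ⟨a4, b4, ha4, hb4, hab4, hq2⟩)
    · exact h
  have hb4' : 0 < b4 := by
    rcases hb4.eq_or_lt with h | h
    · exfalso
      have hqv : q = v 3 := by
        rw [← hq2, ← h, show a4 = 1 by linarith]; simp
      exact g31 (hqv ▸ ⟨a3, b3, ha3, hb3, hab3, hq1⟩)
    · exact h
  have ha4' : 0 < a4 := by
    rcases ha4.eq_or_lt with h | h
    · exfalso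
      have hqv : q = v 0 := by
        rw [← hq2, ← h, show b4 = 1 by linarith]; simp
      exact g01 (hqv ▸ ⟨a3, b3, ha3, hb3, hab3, hq1⟩)
    · exact h
  -- the four orientation relations
  have R1 : a2 * Dt (v 0) (v 1) (v 2) + b2 * Dt (v 0) (v 1) (v 3) = 0 :=
    Dt_key (v 0) (v 1) (v 2) (v 3) hab1 hab2 (hp1.trans hp2.symm)
  have R2 : a1 * Dt (v 0) (v 2) (v 3) + b1 * Dt (v 1) (v 2) (v 3) = 0 := by
    have h := Dt_key (v 2) (v 3) (v 0) (v 1) hab2 hab1 (hp2.trans hp1.symm)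
    rwa [Dt_cyc (v 2) (v 3) (v 0), Dt_cyc (v 2) (v 3) (v 1)] at h
  have R3 : a4 * Dt (v 1) (v 2) (v 3) + b4 * Dt (v 0) (v 1) (v 2) = 0 := by
    have h := Dt_key (v 1) (v 2) (v 3) (v 0) hab3 hab4 (hq1.trans hq2.symm)
    rwa [Dt_cyc (v 1) (v 2) (v 0)] at h
  have R4 : a3 * Dt (v 0) (v 1) (v 3) + b3 * Dt (v 0) (v 2) (v 3) = 0 := by
    have h := Dt_key (v 3) (v 0) (v 1) (v 2) hab4 hab3 (hq2.trans hq1.symm)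
    rwa [Dt_cyc (v 3) (v 0) (v 1), Dt_cyc (v 1) (v 3) (v 0),
      Dt_cyc (v 3) (v 0) (v 2), Dt_cyc (v 2) (v 3) (v 0)] at h
  by_cases hcol : Dt (v 0) (v 1) (v 2) = 0
  · -- degenerate case: all four points are collinear
    have hd4 : Dt (v 1) (v 2) (v 3) = 0 :=
      zero_link (by linarith : b4 * Dt (v 0) (v 1) (v 2) + a4 * Dt (v 1) (v 2) (v 3) = 0)
        hb4' ha4' hcol
    have hd3 : Dt (v 0) (v 2) (v 3) = 0 :=
      zero_link (by linarith : b1 * Dt (v 1) (v 2) (v 3) + a1 * Dt (v 0) (v 2) (v 3) = 0)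
        hb1' ha1' hd4
    have hd2 : Dt (v 0) (v 1) (v 3) = 0 :=
      zero_link (by linarith : b3 * Dt (v 0) (v 2) (v 3) + a3 * Dt (v 0) (v 1) (v 3) = 0)
        hb3' ha3' hd3
    have hu : v 1 - v 0 ≠ 0 := sub_ne_zero_of_ne (hinj.ne (by decide))
    obtain ⟨x2, hx2⟩ := exists_smul (v 1 - v 0) (v 2 - v 0) hu
      (by simpa [Dt, Prod.fst_sub, Prod.snd_sub] using hcol)
    obtain ⟨x3, hx3⟩ := exists_smul (v 1 - v 0) (v 3 - v 0) hu
      (by simpa [Dt, Prod.fst_sub, Prod.snd_sub] using hd2)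
    have hv2 : v 2 = x2 • (v 1 - v 0) + v 0 := sub_eq_iff_eq_add.mp hx2
    have hv3 : v 3 = x3 • (v 1 - v 0) + v 0 := sub_eq_iff_eq_add.mp hx3
    have key : (b1 - ((1 - b2) * x2 + b2 * x3)) • (v 1 - v 0) = 0 := by
      have h := hp1.trans hp2.symm
      rw [hv2, hv3, show a1 = 1 - b1 by linarith, show a2 = 1 - b2 by linarith] at h
      linear_combination (norm := module) h
    have hb1x : b1 = (1 - b2) * x2 + b2 * x3 := by
      rcases smul_eq_zero.mp key with h | h
      · linarith
      · exact absurd h hu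
    have hb1le : b1 ≤ 1 := by linarith
    rcases le_total x2 x3 with hxx | hxx
    · have hl : x2 ≤ b1 := by nlinarith
      have hr : b1 ≤ x3 := by nlinarith
      by_cases h0 : 0 ≤ x2
      · exact g20 ⟨1 - x2, x2, by linarith, h0, by ring, by rw [hv2]; module⟩
      · push_neg at h0
        have hden : 0 < x3 - x2 := by linarith
        have h3 : 0 ≤ x3 := by linarith
        refine g02 ⟨x3 / (x3 - x2), -x2 / (x3 - x2), by apply div_nonneg <;> linarith, by apply div_nonneg <;> linarith,
          by field_simp; ring, ?_⟩
        rw [hv2, hv3]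
        match_scalars <;> (field_simp; try ring)
    · have hl : x3 ≤ b1 := by nlinarith
      have hr : b1 ≤ x2 := by nlinarith
      by_cases h0 : 0 ≤ x3
      · exact g30 ⟨1 - x3, x3, by linarith, h0, by ring, by rw [hv3]; module⟩
      · push_neg at h0
        have hden : 0 < x2 - x3 := by linarith
        have h2 : 0 ≤ x2 := by linarith
        refine g02 ⟨-x3 / (x2 - x3), x2 / (x2 - x3), by apply div_nonneg <;> linarith, by apply div_nonneg <;> linarith,
          by field_simp; ring, ?_⟩
        rw [hv2, hv3]
        match_scalars <;> (field_simp; try ring)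
  · -- nondegenerate case: sign contradiction
    have hd2 : Dt (v 0) (v 1) (v 3) ≠ 0 := fun h =>
      hcol (zero_link (by linarith : b2 * Dt (v 0) (v 1) (v 3) +
        a2 * Dt (v 0) (v 1) (v 2) = 0) hb2' ha2' h)
    have hd3 : Dt (v 0) (v 2) (v 3) ≠ 0 := fun h =>
      hd2 (zero_link (by linarith : b3 * Dt (v 0) (v 2) (v 3) +
        a3 * Dt (v 0) (v 1) (v 3) = 0) hb3' ha3' h)
    have hd4 : Dt (v 1) (v 2) (v 3) ≠ 0 := fun h =>
      hd3 (zero_link (by linarith : b1 * Dt (v 1) (v 2) (v 3) +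
        a1 * Dt (v 0) (v 2) (v 3) = 0) hb1' ha1' h)
    have P1 : Dt (v 0) (v 1) (v 2) * Dt (v 0) (v 1) (v 3) < 0 :=
      opp_sign R1 ha2' hb2' hcol
    have P2 : Dt (v 0) (v 2) (v 3) * Dt (v 1) (v 2) (v 3) < 0 :=
      opp_sign R2 ha1' hb1' hd3
    have P3 : Dt (v 1) (v 2) (v 3) * Dt (v 0) (v 1) (v 2) < 0 :=
      opp_sign R3 ha4' hb4' hd4
    have P4 : Dt (v 0) (v 1) (v 3) * Dt (v 0) (v 2) (v 3) < 0 :=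
      opp_sign R4 ha3' hb3' hd2
    have I := Dt_identity (v 0) (v 1) (v 2) (v 3)
    rcases lt_or_gt_of_ne hcol with h | h
    · have h2 : 0 < Dt (v 0) (v 1) (v 3) := by nlinarith
      have h4 : 0 < Dt (v 1) (v 2) (v 3) := by nlinarith
      have h3 : Dt (v 0) (v 2) (v 3) < 0 := by nlinarith
      linarith
    · have h2 : Dt (v 0) (v 1) (v 3) < 0 := by nlinarith
      have h4 : Dt (v 1) (v 2) (v 3) < 0 := by nlinarith
      have h3 : 0 < Dt (v 0) (v 2) (v 3) := by nlinarith
      linarith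
end
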